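/- With $X$, $A$, $B$, $C = A+B$ as in the perturbed rotation example and $B$ quasinilpotent, suppose $f \in X$ is a nonzero eigenvector of $C$ with eigenvalue $1$ and $h \in X$ satisfies $(I - C)h = f$. Then a contradiction follows; i.e., $1$ has no root vectors: there is no $h$ with $(I-C)h = f$ for nonzero $f \in \ker(I - C)$. -/

import Mathlib

/-!
Evaluating `(I - C) h = f` at `1/2`, where `A` acts as the identity and `B` vanishes because
`l (1/2) = 0`, gives `f (1/2) = 0`. Then `A f = 0`, so the eigenvector equation `C f = f`
becomes `B f = f`, which makes `1` a point of the spectrum of the quasinilpotent `B`.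
-/

theorem ContinuousLinearMap.eq_zero_of_apply_eq_self_of_spectralRadius_eq_zero
    {𝕜 E : Type*} [NormedField 𝕜] [NormedAddCommGroup E] [NormedSpace 𝕜 E]
    {T : E →L[𝕜] E} (hT : spectralRadius 𝕜 T = 0) {f : E} (hf : T f = f) : f = 0 := by
  have hunit : IsUnit (algebraMap 𝕜 (E →L[𝕜] E) 1 - T) :=
    spectrum.mem_resolventSet_iff.mp <|
      spectrum.mem_resolventSet_of_spectralRadius_lt (by simp [hT])
  obtain ⟨u, hu⟩ := hunit
  have hker : (u : E →L[𝕜] E) f = 0 := by simp [hu, hf]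
  calc f = (↑u⁻¹ * ↑u : E →L[𝕜] E) f := by rw [u.inv_mul]; rfl
    _ = (↑u⁻¹ : E →L[𝕜] E) ((u : E →L[𝕜] E) f) := rfl
    _ = 0 := by rw [hker, map_zero]

section EvalPerturbation

variable {X R : Type*} [TopologicalSpace X] [CommRing R] [TopologicalSpace R]
  [IsTopologicalRing R] {p : X} {A B : C(X, R) →L[R] C(X, R)}

theorem sub_add_apply_apply_eq_zero (hA : ∀ x, A x p = x p) (hB : ∀ x, B x p = 0)
    (h : C(X, R)) : (h - (A + B) h) p = 0 := by
  simp [hA, hB]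

theorem apply_eq_self_of_add_apply_eq_self (hA : ∀ x t, A x t = x p) {f : C(X, R)}
    (hfp : f p = 0) (hf : (A + B) f = f) : B f = f := by
  have hAf : A f = 0 := by ext t; simp [hA, hfp]
  simpa [hAf] using hf

end EvalPerturbation

theorem stmt7 (α : ℝ)
    (l : C(AddCircle (1 : ℝ), ℝ))
    (hl0 : l ((1 / 2 : ℝ) : AddCircle (1 : ℝ)) = 0)
    (A B : C(AddCircle (1 : ℝ), ℝ) →L[ℝ] C(AddCircle (1 : ℝ), ℝ))
    (hA : ∀ (x : C(AddCircle (1 : ℝ), ℝ)) (t : AddCircle (1 : ℝ)),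
      A x t = x (((1 / 2 : ℝ) : AddCircle (1 : ℝ))))
    (hB : ∀ (x : C(AddCircle (1 : ℝ), ℝ)) (t : AddCircle (1 : ℝ)),
      B x t = l t * x (t + ((α : ℝ) : AddCircle (1 : ℝ))))
    (hqn : spectralRadius ℝ B = 0)
    (f : C(AddCircle (1 : ℝ), ℝ)) (hf0 : f ≠ 0) (hf : (A + B) f = f)
    (h : C(AddCircle (1 : ℝ), ℝ)) (hroot : h - (A + B) h = f) :
    False := by
  have hfp : f ((1 / 2 : ℝ) : AddCircle (1 : ℝ)) = 0 :=
    hroot ▸ sub_add_apply_apply_eq_zero (fun x ↦ hA x _) (fun x ↦ by rw [hB, hl0, zero_mul]) h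
  exact hf0 <| ContinuousLinearMap.eq_zero_of_apply_eq_self_of_spectralRadius_eq_zero hqn
    (apply_eq_self_of_add_apply_eq_self hA hfp hf)
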